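/- For nonnegative integers k <= n and l >= 0: sum_{i=k}^n [n-i+l choose l]_q * q^{(l+1)i} / (q;q)_{i-k} = q^{(l+1)k} / (q;q)_{n-k}. -/

import Mathlib

open Finset

variable {F : Type*} [Field F]

/-- `(q;q)_n = (1-q)(1-q^2)...(1-q^n)` -/
def qfac (q : F) (n : ℕ) : F := ∏ j ∈ Finset.range n, (1 - q ^ (j + 1))

/-- `(z;q)_k = (1-z)(1-zq)...(1-zq^{k-1})` -/
def qpoch (z q : F) (k : ℕ) : F := ∏ j ∈ Finset.range k, (1 - z * q ^ j)

/-- Gaussian binomial coefficient `[n choose k]_q` -/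
def qbinom (q : F) (n k : ℕ) : F := qfac q n / (qfac q k * qfac q (n - k))

/-- Sum over weakly increasing `m`-tuples `lo ≤ i_1 ≤ ... ≤ i_m ≤ n` of
`∏_j q^{i_j}/(1-q^{i_j})` (equal to `1` when `m = 0`). -/
def chainSum (q : F) (lo n m : ℕ) : F :=
  ∑ c ∈ Finset.univ.filter (fun c : Fin m → Fin (n + 1) =>
      (∀ j k : Fin m, j ≤ k → c j ≤ c k) ∧ ∀ j, lo ≤ (c j : ℕ)),
    ∏ j, q ^ (c j : ℕ) / (1 - q ^ (c j : ℕ))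

/-- Complete homogeneous symmetric function `h_m` of the variables
`x lo, x (lo+1), ..., x n`. -/
def hSum {R : Type*} [CommRing R] (x : ℕ → R) (lo n m : ℕ) : R :=
  ∑ c ∈ Finset.univ.filter (fun c : Fin m → Fin (n + 1) =>
      (∀ j k : Fin m, j ≤ k → c j ≤ c k) ∧ ∀ j, lo ≤ (c j : ℕ)),
    ∏ j, x (c j : ℕ)
section Aux

variable (q : F) (hq : ∀ i : ℕ, 1 ≤ i → q ^ i ≠ 1)

lemma qfac_zero : qfac q 0 = 1 := by simp [qfac]

lemma qfac_succ (n : ℕ) : qfac q (n + 1) = qfac q n * (1 - q ^ (n + 1)) :=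
  Finset.prod_range_succ _ _

include hq

lemma one_sub_pow_ne (i : ℕ) (hi : 1 ≤ i) : (1 : F) - q ^ i ≠ 0 :=
  sub_ne_zero.mpr (Ne.symm (hq i hi))

lemma qfac_ne_zero (n : ℕ) : qfac q n ≠ 0 := by
  unfold qfac
  refine Finset.prod_ne_zero_iff.mpr fun j _ => ?_
  exact one_sub_pow_ne q hq (j + 1) (by omega)

lemma qbinom_self (m : ℕ) : qbinom q m m = 1 := by
  unfold qbinom
  rw [Nat.sub_self, qfac_zero, mul_one, div_self (qfac_ne_zero q hq m)]

lemma qbinom_zero (m : ℕ) : qbinom q m 0 = 1 := by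
  unfold qbinom
  rw [Nat.sub_zero, qfac_zero, one_mul, div_self (qfac_ne_zero q hq m)]

lemma qbinom_pascal (b d : ℕ) :
    qbinom q (b + d + 2) (b + 1)
      = qbinom q (b + d + 1) (b + 1) + q ^ (d + 1) * qbinom q (b + d + 1) b := by
  unfold qbinom
  rw [show b + d + 2 - (b + 1) = d + 1 from by omega,
      show b + d + 1 - (b + 1) = d from by omega,
      show b + d + 1 - b = d + 1 from by omega,
      show b + d + 2 = (b + d + 1) + 1 from by omega,
      qfac_succ, qfac_succ q d, qfac_succ q b]
  have h1 := qfac_ne_zero q hq (b + d + 1)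
  have h2 := qfac_ne_zero q hq b
  have h3 := qfac_ne_zero q hq d
  have h4 := one_sub_pow_ne q hq (b + 1) (by omega)
  have h5 := one_sub_pow_ne q hq (d + 1) (by omega)
  field_simp
  ring

lemma keyA (l : ℕ) : ∀ m : ℕ,
    ∑ j ∈ Finset.range (m + 1),
        qbinom q (m - j + l) l * q ^ ((l + 1) * j) / qfac q j = 1 / qfac q m := by
  induction l with
  | zero =>
    intro m
    induction m with
    | zero => simp [qbinom_zero q hq, qfac_zero]
    | succ m ihm =>
      simp only [qbinom_zero q hq, one_mul] at ihm ⊢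
      rw [Finset.sum_range_succ, ihm]
      rw [qfac_succ q m]
      have h1 := qfac_ne_zero q hq m
      have h2 := one_sub_pow_ne q hq (m + 1) (by omega)
      field_simp
      ring
  | succ l ihl =>
    intro m
    induction m with
    | zero =>
      simp [qbinom_self q hq, qfac_zero]
    | succ m ihm =>
      rw [Finset.sum_range_succ]
      have hstep : ∀ j ∈ Finset.range (m + 1),
          qbinom q (m + 1 - j + (l + 1)) (l + 1) * q ^ ((l + 1 + 1) * j) / qfac q j
            = qbinom q (m - j + (l + 1)) (l + 1) * q ^ ((l + 1 + 1) * j) / qfac q j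
              + q ^ (m + 1) *
                (qbinom q (m + 1 - j + l) l * q ^ ((l + 1) * j) / qfac q j) := by
        intro j hj
        have hjm : j ≤ m := by simpa using Nat.lt_succ_iff.mp (Finset.mem_range.mp hj)
        have e1 : m + 1 - j + (l + 1) = l + (m - j) + 2 := by omega
        have e2 : l + (m - j) + 1 = m - j + (l + 1) := by omega
        have e3 : l + (m - j) + 1 = m + 1 - j + l := by omega
        rw [e1, qbinom_pascal q hq l (m - j)]
        rw [show m - j + 1 = m + 1 - j from by omega]
        nth_rewrite 1 [e2]
        rw [e3]
        have epow : q ^ (m + 1 - j) * q ^ ((l + 1 + 1) * j) = q ^ (m + 1) * q ^ ((l + 1) * j) := by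
          rw [← pow_add, ← pow_add]
          congr 1
          have : (l + 1 + 1) * j = j + (l + 1) * j := by ring
          omega
        rw [add_mul, add_div]
        congr 1
        rw [show q ^ (m + 1 - j) * qbinom q (m + 1 - j + l) l * q ^ ((l + 1 + 1) * j)
              = q ^ (m + 1) * (qbinom q (m + 1 - j + l) l * q ^ ((l + 1) * j)) from by
            rw [mul_right_comm, epow]; ring]
        rw [mul_div_assoc]
      rw [Finset.sum_congr rfl hstep, Finset.sum_add_distrib, ihm, ← Finset.mul_sum]
      have hsum2 : ∑ j ∈ Finset.range (m + 1),
          qbinom q (m + 1 - j + l) l * q ^ ((l + 1) * j) / qfac q j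
            = 1 / qfac q (m + 1)
              - q ^ ((l + 1) * (m + 1)) / qfac q (m + 1) := by
        have := ihl (m + 1)
        rw [Finset.sum_range_succ] at this
        rw [show m + 1 - (m + 1) + l = l from by omega, qbinom_self q hq l, one_mul] at this
        linear_combination this
      rw [hsum2]
      rw [show m + 1 - (m + 1) + (l + 1) = l + 1 from by omega, qbinom_self q hq, one_mul]
      have h1 := qfac_ne_zero q hq m
      have h2 := one_sub_pow_ne q hq (m + 1) (by omega)
      have hpow : q ^ ((l + 1 + 1) * (m + 1)) = q ^ (m + 1) * q ^ ((l + 1) * (m + 1)) := by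
        rw [← pow_add]; congr 1; ring
      rw [qfac_succ q m, hpow]
      field_simp
      ring

end Aux

theorem fu_lascoux_eq10_shifted (q : F) (k n l : ℕ) (hkn : k ≤ n)
    (hq : ∀ i : ℕ, 1 ≤ i → q ^ i ≠ 1) :
    ∑ i ∈ Finset.Icc k n, qbinom q (n - i + l) l * q ^ ((l + 1) * i) / qfac q (i - k)
      = q ^ ((l + 1) * k) / qfac q (n - k) := by
  set m := n - k with hm
  rw [← Finset.Ico_add_one_right_eq_Icc, Finset.sum_Ico_eq_sum_range]
  rw [show n + 1 - k = m + 1 from by omega]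
  have hstep : ∀ i ∈ Finset.range (m + 1),
      qbinom q (n - (k + i) + l) l * q ^ ((l + 1) * (k + i)) / qfac q (k + i - k)
        = q ^ ((l + 1) * k) *
            (qbinom q (m - i + l) l * q ^ ((l + 1) * i) / qfac q i) := by
    intro i hi
    rw [show n - (k + i) = m - i from by omega, show k + i - k = i from by omega,
        show (l + 1) * (k + i) = (l + 1) * k + (l + 1) * i from by ring, pow_add]
    ring
  rw [Finset.sum_congr rfl hstep, ← Finset.mul_sum, keyA q hq l m]
  rw [mul_one_div]
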